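/- Let a₁, a₂, a₃ > 0 and ξ ∈ ℂ, and let η, r and the point (z,t) = γ_{ξ,η}(r) with z = x₁ + ix₂, t = x₃ be as in the ellipsoid parametrization: η = [a₁(ξ+conj(ξ))(1−ξ²) + a₂(ξ−conj(ξ))(1+ξ²) − 2a₃ξ(1−|ξ|²)]/(2√(D(ξ))), r = √(D(ξ))/(1+|ξ|²), D(ξ) = a₁(ξ+conj(ξ))² − a₂(ξ−conj(ξ))² + a₃(1−|ξ|²)². Then the direction ν(ξ) of the line satisfies ν(ξ) = r·(x₁/a₁ + i·x₂/a₂, x₃/a₃); i.e. ν(ξ) is parallel to the gradient of F(x₁,x₂,x₃) = x₁²/a₁ + x₂²/a₂ + x₃²/a₃ at (x₁,x₂,x₃), so the line γ_{ξ,η} is normal to the ellipsoid F = 1 at that point. -/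

import Mathlib

/-! Write `D` for the radicand `Dc a₁ a₂ a₃ ξ` and treat `ζ = conj ξ` as an independent variable.
Two polynomial identities in `ξ, ζ`, together with `(√D)² = D`, show that `γ_{ξ,η}(r)` is the
point `(a₁(ξ + ζ) + a₂(ξ - ζ), a₃(1 - ξζ)) / √D`. Dividing its coordinates by `a₁, a₂, a₃` leaves
`(2ξ, 1 - |ξ|²) / √D`, and multiplying by `r = √D / (1 + |ξ|²)` gives `ν(ξ)`. -/

open Complex ComplexConjugate

/-- Inverse stereographic projection from the south pole:
`ν(ξ) = (2ξ/(1+|ξ|²), (1−|ξ|²)/(1+|ξ|²)) ∈ ℂ × ℝ`. -/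
noncomputable def nu (ξ : ℂ) : ℂ × ℝ :=
  ((2 * ξ) / (((1 + Complex.normSq ξ : ℝ) : ℂ)),
   (1 - Complex.normSq ξ) / (1 + Complex.normSq ξ))

/-- The parametrized line `γ_{ξ,η}(r) = (z(r), t(r)) ∈ ℂ × ℝ` with
`z(r) = (2(η − conj(η)ξ²) + 2ξ(1+|ξ|²)r)/(1+|ξ|²)²` and
`t(r) = (−2(η·conj(ξ) + conj(η)·ξ) + (1−|ξ|⁴)r)/(1+|ξ|²)²`. -/
noncomputable def gamma (ξ η : ℂ) (r : ℝ) : ℂ × ℝ :=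
  ((2 * (η - conj η * ξ ^ 2) + 2 * ξ * ((1 + Complex.normSq ξ : ℝ) : ℂ) * (r : ℂ)) /
      (((1 + Complex.normSq ξ : ℝ) : ℂ) ^ 2),
   (-2 * (η * conj ξ + conj η * ξ).re + (1 - Complex.normSq ξ ^ 2) * r) /
      (1 + Complex.normSq ξ) ^ 2)

/-- The radicand of the ellipsoid parametrization, as a complex number:
`a₁(ξ+conj ξ)² − a₂(ξ−conj ξ)² + a₃(1−|ξ|²)²` (it is in fact real). -/
noncomputable def Dc (a₁ a₂ a₃ : ℝ) (ξ : ℂ) : ℂ :=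
  (a₁ : ℂ) * (ξ + conj ξ) ^ 2 - (a₂ : ℂ) * (ξ - conj ξ) ^ 2 +
    (a₃ : ℂ) * (((1 - Complex.normSq ξ : ℝ) : ℂ)) ^ 2

section PolynomialIdentities

variable {R : Type*} [CommRing R] (a₁ a₂ a₃ ξ ζ : R)

def ellipsoidNumerator : R :=
  a₁ * (ξ + ζ) * (1 - ξ ^ 2) + a₂ * (ξ - ζ) * (1 + ξ ^ 2) - 2 * a₃ * ξ * (1 - ξ * ζ)

def ellipsoidRadicand : R :=
  a₁ * (ξ + ζ) ^ 2 - a₂ * (ξ - ζ) ^ 2 + a₃ * (1 - ξ * ζ) ^ 2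

theorem map_ellipsoidNumerator {S : Type*} [CommRing S] (f : R →+* S) :
    f (ellipsoidNumerator a₁ a₂ a₃ ξ ζ) =
      ellipsoidNumerator (f a₁) (f a₂) (f a₃) (f ξ) (f ζ) := by
  simp [ellipsoidNumerator, map_ofNat]

theorem ellipsoidNumerator_sub_add_radicand :
    ellipsoidNumerator a₁ a₂ a₃ ξ ζ - ellipsoidNumerator a₁ a₂ a₃ ζ ξ * ξ ^ 2 +
      2 * ξ * ellipsoidRadicand a₁ a₂ a₃ ξ ζ =
      (a₁ * (ξ + ζ) + a₂ * (ξ - ζ)) * (1 + ξ * ζ) ^ 2 := by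
  unfold ellipsoidNumerator ellipsoidRadicand
  ring

theorem ellipsoidRadicand_sub_numerator :
    (1 - ξ * ζ) * ellipsoidRadicand a₁ a₂ a₃ ξ ζ -
      (ellipsoidNumerator a₁ a₂ a₃ ξ ζ * ζ + ellipsoidNumerator a₁ a₂ a₃ ζ ξ * ξ) =
      a₃ * (1 - ξ * ζ) * (1 + ξ * ζ) ^ 2 := by
  unfold ellipsoidNumerator ellipsoidRadicand
  ring

end PolynomialIdentities

theorem Dc_eq_ellipsoidRadicand (a₁ a₂ a₃ : ℝ) (ξ : ℂ) :
    Dc a₁ a₂ a₃ ξ = ellipsoidRadicand (a₁ : ℂ) a₂ a₃ ξ (conj ξ) := by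
  rw [Dc, ellipsoidRadicand, mul_conj]
  push_cast
  ring

theorem Dc_eq_ofReal (a₁ a₂ a₃ : ℝ) (ξ : ℂ) :
    Dc a₁ a₂ a₃ ξ =
      ((4 * a₁ * ξ.re ^ 2 + 4 * a₂ * ξ.im ^ 2 + a₃ * (1 - normSq ξ) ^ 2 : ℝ) : ℂ) := by
  rw [Dc, add_conj, sub_conj]
  push_cast
  linear_combination (-4 * a₂ * ξ.im ^ 2 : ℂ) * I_sq

theorem Dc_re_pos {a₁ a₂ a₃ : ℝ} (ha₁ : 0 < a₁) (ha₂ : 0 < a₂) (ha₃ : 0 < a₃) (ξ : ℂ) :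
    0 < (Dc a₁ a₂ a₃ ξ).re := by
  rw [Dc_eq_ofReal, ofReal_re]
  rcases eq_or_ne ξ.re 0 with hx | hx
  · rcases eq_or_ne ξ.im 0 with hy | hy
    · simpa [normSq_apply, hx, hy] using ha₃
    · positivity
  · positivity

theorem one_add_normSq_pos (ξ : ℂ) : 0 < 1 + normSq ξ :=
  add_pos_of_pos_of_nonneg one_pos (normSq_nonneg ξ)

theorem one_add_mul_conj_ne_zero (ξ : ℂ) : 1 + ξ * conj ξ ≠ 0 := by
  rw [mul_conj]
  exact_mod_cast (one_add_normSq_pos ξ).ne'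

section FootPoint

variable (a₁ a₂ a₃ : ℝ) (ξ : ℂ) {s : ℝ}

theorem gamma_fst_eq (hs : s ≠ 0)
    (hsq : (s : ℂ) ^ 2 = ellipsoidRadicand (a₁ : ℂ) a₂ a₃ ξ (conj ξ)) :
    (gamma ξ (ellipsoidNumerator (a₁ : ℂ) a₂ a₃ ξ (conj ξ) / (2 * s)) (s / (1 + normSq ξ))).1 =
      ((2 * a₁ * ξ.re / s : ℝ) : ℂ) + ((2 * a₂ * ξ.im / s : ℝ) : ℂ) * I := by
  have hu := one_add_mul_conj_ne_zero ξ
  have hs' : (s : ℂ) ≠ 0 := ofReal_ne_zero.2 hs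
  simp only [gamma, ofReal_div, ofReal_add, ofReal_one, normSq_eq_conj_mul_self]
  simp only [map_div₀, map_mul, map_ofNat, conj_ofReal, map_ellipsoidNumerator, conj_conj]
  field_simp
  linear_combination (norm := (push_cast; ring))
    ellipsoidNumerator_sub_add_radicand (a₁ : ℂ) a₂ a₃ ξ (conj ξ) + 2 * ξ * hsq +
      (1 + conj ξ * ξ) ^ 2 * (a₁ * add_conj ξ + a₂ * sub_conj ξ)

theorem gamma_snd_eq (hs : s ≠ 0)
    (hsq : (s : ℂ) ^ 2 = ellipsoidRadicand (a₁ : ℂ) a₂ a₃ ξ (conj ξ)) :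
    (gamma ξ (ellipsoidNumerator (a₁ : ℂ) a₂ a₃ ξ (conj ξ) / (2 * s)) (s / (1 + normSq ξ))).2 =
      a₃ * (1 - normSq ξ) / s := by
  set η := ellipsoidNumerator (a₁ : ℂ) a₂ a₃ ξ (conj ξ) / (2 * s)
  have hu : 1 + conj ξ * ξ ≠ 0 := mul_comm ξ (conj ξ) ▸ one_add_mul_conj_ne_zero ξ
  have hs' : (s : ℂ) ≠ 0 := ofReal_ne_zero.2 hs
  have hw : ((η * conj ξ + conj η * ξ).re : ℂ) = η * conj ξ + conj η * ξ :=
    conj_eq_iff_re.1 (by simp only [map_add, map_mul, conj_conj]; ring)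
  apply ofReal_injective
  simp only [gamma, ofReal_div, ofReal_add, ofReal_mul, ofReal_neg, ofReal_sub, ofReal_pow,
    ofReal_one, ofReal_ofNat, hw, normSq_eq_conj_mul_self]
  simp only [η, map_div₀, map_mul, map_ofNat, conj_ofReal, map_ellipsoidNumerator, conj_conj]
  field_simp
  linear_combination (1 + conj ξ * ξ) * ellipsoidRadicand_sub_numerator (a₁ : ℂ) a₂ a₃ ξ (conj ξ) +
    (1 - conj ξ ^ 2 * ξ ^ 2) * hsq

end FootPoint

theorem nu_eq_smul (ξ : ℂ) {s : ℝ} (hs : s ≠ 0) :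
    nu ξ = (s / (1 + normSq ξ)) •
      (((2 * ξ.re / s : ℝ) : ℂ) + ((2 * ξ.im / s : ℝ) : ℂ) * I, (1 - normSq ξ) / s) := by
  have hu := (one_add_normSq_pos ξ).ne'
  have hu' : 1 + (normSq ξ : ℂ) ≠ 0 := by exact_mod_cast hu
  have hs' : (s : ℂ) ≠ 0 := ofReal_ne_zero.2 hs
  rw [nu, Prod.smul_mk, real_smul, smul_eq_mul]
  congr 1
  · push_cast
    field_simp
    exact (re_add_im ξ).symm
  · field_simp

/-- In the ellipsoid parametrization, with `(z,t) = γ_{ξ,η}(r)`, `z = x₁ + ix₂`,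
`t = x₃`, the direction of the line satisfies `ν(ξ) = r·(x₁/a₁ + i·x₂/a₂, x₃/a₃)`:
the line `γ_{ξ,η}` is normal to the ellipsoid `x₁²/a₁ + x₂²/a₂ + x₃²/a₃ = 1` at
that point. -/
theorem ellipsoid_normal (a₁ a₂ a₃ : ℝ)
    (ha₁ : 0 < a₁) (ha₂ : 0 < a₂) (ha₃ : 0 < a₃) (ξ : ℂ) (η : ℂ) (r : ℝ)
    (hη : η = ((a₁ : ℂ) * (ξ + conj ξ) * (1 - ξ ^ 2) +
        (a₂ : ℂ) * (ξ - conj ξ) * (1 + ξ ^ 2) -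
        2 * (a₃ : ℂ) * ξ * (((1 - Complex.normSq ξ : ℝ) : ℂ))) /
        (2 * ((Real.sqrt (Dc a₁ a₂ a₃ ξ).re : ℝ) : ℂ)))
    (hr : r = Real.sqrt (Dc a₁ a₂ a₃ ξ).re / (1 + Complex.normSq ξ)) :
    nu ξ = r • ((((gamma ξ η r).1.re / a₁ : ℝ) : ℂ) +
        (((gamma ξ η r).1.im / a₂ : ℝ) : ℂ) * Complex.I,
      (gamma ξ η r).2 / a₃) := by
  set s := Real.sqrt (Dc a₁ a₂ a₃ ξ).re
  have hD := Dc_re_pos ha₁ ha₂ ha₃ ξ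
  have hs : s ≠ 0 := (Real.sqrt_pos.2 hD).ne'
  have hsq : (s : ℂ) ^ 2 = ellipsoidRadicand (a₁ : ℂ) a₂ a₃ ξ (conj ξ) := by
    rw [← Dc_eq_ellipsoidRadicand, ← ofReal_pow, Real.sq_sqrt hD.le, Dc_eq_ofReal, ofReal_re]
  have hN : η = ellipsoidNumerator (a₁ : ℂ) a₂ a₃ ξ (conj ξ) / (2 * s) := by
    rw [hη, ellipsoidNumerator, mul_conj]
    push_cast
    rfl
  subst hN hr
  rw [nu_eq_smul ξ hs, gamma_fst_eq a₁ a₂ a₃ ξ hs hsq, gamma_snd_eq a₁ a₂ a₃ ξ hs hsq]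
  simp only [add_re, add_im, ofReal_re, ofReal_im, mul_I_re, mul_I_im, neg_zero, add_zero,
    zero_add]
  field_simp
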